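/- Let r ≥ 1 be an integer and s ∈ ℝ with s > 1. Then t_r⋆(s) = ∑ 1 / (1^{c₁} c₁! · 2^{c₂} c₂! ⋯ r^{c_r} c_r!) · t(s)^{c₁} t(2s)^{c₂} ⋯ t(rs)^{c_r}, where the sum runs over all tuples (c₁,…,c_r) of nonnegative integers satisfying c₁ + 2c₂ + ⋯ + r·c_r = r. -/

import Mathlib

/-!
`t_r⋆(s)` is the complete homogeneous symmetric function `h_r` at the points `x_n = (2n-1)^{-s}`,
and `t(ks)` is the power sum `p_k` there. In `ℝ≥0∞`, where all these series converge, counting in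
two ways the pairs `(M, (i, k))` with `card M = r` and `i` occurring more than `k` times in `M`
gives Newton's identity `r h_r = ∑_{k=1}^r p_k h_{r-k}`. The cycle index sum `∑_c p^c / z_c`
satisfies the same recursion, because `(i+1) c_i / z_c = 1 / z_{c - e_i}`, so the two agree. For
`s > 1` the power sums are finite, and taking real parts gives the formula.
-/

open scoped ENNReal
open Finset

/-- The `t`-function for real `s > 1`: `t(s) = ∑_{n≥1} (2n−1)^{-s}`. -/
noncomputable def tFun (s : ℝ) : ℝ :=
  ∑' n : ℕ+, (((2 * (n : ℕ) - 1 : ℕ) : ℝ) ^ s)⁻¹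

/-- The multiple `t`-star function at identical arguments:
`t_r⋆(s) = ∑_{n₁ ≥ ⋯ ≥ n_r ≥ 1} ((2n₁−1)⋯(2n_r−1))^{-s}`. -/
noncomputable def multTStar (r : ℕ) (s : ℝ) : ℝ :=
  ∑' f : {f : Fin r → ℕ+ // Antitone f},
    ∏ i, (((2 * (f.1 i : ℕ) - 1 : ℕ) : ℝ) ^ s)⁻¹

/-- The (finite) set of all tuples `(c₁, …, c_r)` of nonnegative integers with
`c₁ + 2c₂ + ⋯ + r·c_r = r`. -/
def weightedTuples (r : ℕ) : Finset (Fin r → ℕ) :=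
  (Fintype.piFinset fun _ : Fin r => Finset.range (r + 1)).filter
    fun c => ∑ i : Fin r, (i.val + 1) * c i = r

section Newton

variable {ι : Type*}

noncomputable def completeSum (x : ι → ℝ≥0∞) (r : ℕ) : ℝ≥0∞ :=
  ∑' M : Sym ι r, ((M : Multiset ι).map x).prod

noncomputable def powerSum (x : ι → ℝ≥0∞) (k : ℕ) : ℝ≥0∞ :=
  ∑' i, x i ^ k

theorem completeSum_zero (x : ι → ℝ≥0∞) : completeSum x 0 = 1 := by
  rw [completeSum, tsum_fintype, Fintype.sum_unique]
  exact Multiset.prod_zero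

theorem tsum_sym_add_eq_tsum_ite_le [DecidableEq ι] {α : Type*} [AddCommMonoid α]
    [TopologicalSpace α] (f : Multiset ι → α) {A : Multiset ι} {n r : ℕ}
    (h : n + Multiset.card A = r) :
    ∑' M : Sym ι n, f (M + A) = ∑' M : Sym ι r, if A ≤ (M : Multiset ι) then f M else 0 := by
  have hinj : Function.Injective fun M : Sym ι n => (⟨M + A, by simp [h]⟩ : Sym ι r) :=
    fun M M' hM => Subtype.ext (add_right_cancel (congrArg Subtype.val hM))
  refine Eq.trans ?_ (hinj.tsum_eq (f := fun M : Sym ι r =>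
    if A ≤ (M : Multiset ι) then f M else 0) ?_)
  · exact tsum_congr fun M => (if_pos le_add_self).symm
  · intro M hM
    have hA : A ≤ (M : Multiset ι) := by_contra fun hA => hM (if_neg hA)
    refine ⟨⟨M - A, ?_⟩, Subtype.ext (tsub_add_cancel_of_le hA)⟩
    rw [Multiset.card_sub hA, M.2, ← h, Nat.add_sub_cancel]

theorem card_eq_sum_tsum_replicate_le [DecidableEq ι] (M : Multiset ι) {r : ℕ}
    (hM : Multiset.card M ≤ r) :
    (Multiset.card M : ℝ≥0∞) =
      ∑ k ∈ range r, ∑' i, if Multiset.replicate (k + 1) i ≤ M then 1 else 0 := by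
  have hsupp : ∀ k, ∀ i ∉ M.toFinset,
      (if Multiset.replicate (k + 1) i ≤ M then 1 else 0 : ℝ≥0∞) = 0 := by
    intro k i hi
    refine if_neg ?_
    rw [← Multiset.le_count_iff_replicate_le, Multiset.count_eq_zero_of_notMem (by simpa using hi)]
    omega
  simp_rw [tsum_eq_sum (hsupp _), ← Multiset.le_count_iff_replicate_le]
  rw [sum_comm, ← Multiset.toFinset_sum_count_eq, Nat.cast_sum]
  refine sum_congr rfl fun i _ => ?_
  have hc : Multiset.count i M ≤ r := (Multiset.count_le_card i M).trans hM
  rw [sum_boole, show {k ∈ range r | k + 1 ≤ Multiset.count i M} = range (Multiset.count i M) by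
    ext k; simp only [mem_filter, mem_range]; omega, card_range]

theorem newton_completeSum (x : ι → ℝ≥0∞) (r : ℕ) :
    (r : ℝ≥0∞) * completeSum x r =
      ∑ k ∈ range r, powerSum x (k + 1) * completeSum x (r - (k + 1)) := by
  classical
  calc (r : ℝ≥0∞) * completeSum x r
      = ∑' M : Sym ι r, ∑ k ∈ range r, ∑' i,
          if Multiset.replicate (k + 1) i ≤ (M : Multiset ι) then ((M : Multiset ι).map x).prod
          else 0 := by
        rw [completeSum, ← ENNReal.tsum_mul_left]
        refine tsum_congr fun M => ?_
        have hcard := card_eq_sum_tsum_replicate_le (M : Multiset ι) M.2.le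
        rw [Sym.card_coe] at hcard
        rw [hcard, sum_mul]
        simp_rw [← ENNReal.tsum_mul_right, ite_mul, one_mul, zero_mul]
    _ = ∑ k ∈ range r, ∑' i, ∑' M : Sym ι r,
          if Multiset.replicate (k + 1) i ≤ (M : Multiset ι) then ((M : Multiset ι).map x).prod
          else 0 := by
        rw [Summable.tsum_finsetSum fun _ _ => ENNReal.summable]
        simp_rw [ENNReal.tsum_comm (α := Sym ι r)]
    _ = ∑ k ∈ range r, ∑' i, ∑' M : Sym ι (r - (k + 1)),
          x i ^ (k + 1) * ((M : Multiset ι).map x).prod := by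
        refine sum_congr rfl fun k hk => tsum_congr fun i => ?_
        rw [← tsum_sym_add_eq_tsum_ite_le (fun M => (M.map x).prod) (n := r - (k + 1))
          (A := Multiset.replicate (k + 1) i)
          (by rw [Multiset.card_replicate]; have := mem_range.1 hk; omega)]
        simp only [Multiset.map_add, Multiset.prod_add, Multiset.map_replicate,
          Multiset.prod_replicate, mul_comm]
    _ = ∑ k ∈ range r, powerSum x (k + 1) * completeSum x (r - (k + 1)) := by
        simp_rw [powerSum, completeSum, ENNReal.tsum_mul_left, ENNReal.tsum_mul_right]

end Newton

section CycleIndex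

variable {N : ℕ}

def tupleWeight (c : Fin N → ℕ) : ℕ := ∑ i, (i.val + 1) * c i

-- The bound `c i ≤ N` only makes the set finite: it follows from the weight condition when
-- `n ≤ N` (`mem_tuplesOfWeight`), and `tuplesOfWeight r r` is `weightedTuples r`.
def tuplesOfWeight (N n : ℕ) : Finset (Fin N → ℕ) :=
  (Fintype.piFinset fun _ : Fin N => range (N + 1)).filter fun c => tupleWeight c = n

-- `z_c`, the order of the centralizer of a permutation with `c i` cycles of length `i + 1`.
def centralizerCard (c : Fin N → ℕ) : ℕ := ∏ i, (i.val + 1) ^ c i * (c i).factorial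

noncomputable def cycleIndexTerm (p : ℕ → ℝ≥0∞) (c : Fin N → ℕ) : ℝ≥0∞ :=
  (centralizerCard c : ℝ≥0∞)⁻¹ * ∏ i, p (i.val + 1) ^ c i

noncomputable def cycleIndexSum (p : ℕ → ℝ≥0∞) (N n : ℕ) : ℝ≥0∞ :=
  ∑ c ∈ tuplesOfWeight N n, cycleIndexTerm p c

theorem centralizerCard_pos (c : Fin N → ℕ) : 0 < centralizerCard c :=
  prod_pos fun i _ => Nat.mul_pos (Nat.pow_pos i.val.succ_pos) (Nat.factorial_pos _)

theorem le_tupleWeight (c : Fin N → ℕ) (i : Fin N) : (i.val + 1) * c i ≤ tupleWeight c :=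
  single_le_sum (f := fun j : Fin N => (j.val + 1) * c j) (fun _ _ => Nat.zero_le _)
    (mem_univ i)

theorem tupleWeight_add_single (c : Fin N → ℕ) (i : Fin N) :
    tupleWeight (c + Pi.single i 1) = tupleWeight c + (i.val + 1) := by
  simp [tupleWeight, mul_add, sum_add_distrib, Pi.single_apply]

theorem mem_tuplesOfWeight {n : ℕ} (hn : n ≤ N) {c : Fin N → ℕ} :
    c ∈ tuplesOfWeight N n ↔ tupleWeight c = n := by
  simp only [tuplesOfWeight, mem_filter, Fintype.mem_piFinset, mem_range, and_iff_right_iff_imp]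
  intro hc i
  have := le_tupleWeight c i
  nlinarith

theorem tuplesOfWeight_zero : tuplesOfWeight N 0 = {0} := by
  ext c
  rw [mem_tuplesOfWeight (Nat.zero_le N), tupleWeight, sum_eq_zero_iff, mem_singleton,
    funext_iff]
  simp

theorem prod_apply_add_single {M : Type*} [CommMonoid M] (g : Fin N → ℕ → M) (c : Fin N → ℕ)
    (i : Fin N) :
    ∏ j, g j ((c + Pi.single i 1 : Fin N → ℕ) j) = g i (c i + 1) * ∏ j ∈ {i}ᶜ, g j (c j) := by
  rw [Fintype.prod_eq_mul_prod_compl i]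
  congr 1
  · simp
  · refine prod_congr rfl fun j hj => ?_
    rw [Pi.add_apply, Pi.single_eq_of_ne (by simpa using hj), add_zero]

theorem centralizerCard_add_single (c : Fin N → ℕ) (i : Fin N) :
    centralizerCard (c + Pi.single i 1) = (i.val + 1) * (c i + 1) * centralizerCard c := by
  rw [centralizerCard, centralizerCard,
    prod_apply_add_single (fun j k => (j.val + 1) ^ k * k.factorial),
    Fintype.prod_eq_mul_prod_compl i, pow_succ, Nat.factorial_succ]
  ring

theorem prod_pow_add_single {M : Type*} [CommMonoid M] (q : Fin N → M) (c : Fin N → ℕ)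
    (i : Fin N) : ∏ j, q j ^ (c + Pi.single i 1 : Fin N → ℕ) j = q i * ∏ j, q j ^ c j := by
  rw [prod_apply_add_single (fun j k => q j ^ k), Fintype.prod_eq_mul_prod_compl i, pow_succ',
    mul_assoc]

theorem mul_cycleIndexTerm_add_single (p : ℕ → ℝ≥0∞) (c : Fin N → ℕ) (i : Fin N) :
    (((i.val + 1) * (c + Pi.single i 1 : Fin N → ℕ) i : ℕ) : ℝ≥0∞) *
        cycleIndexTerm p (c + Pi.single i 1) =
      p (i.val + 1) * cycleIndexTerm p c := by
  have hi : (c + Pi.single i 1 : Fin N → ℕ) i = c i + 1 := by simp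
  set a : ℝ≥0∞ := (((i.val + 1) * (c i + 1) : ℕ) : ℝ≥0∞)
  have ha : a ≠ 0 := by positivity
  rw [cycleIndexTerm, hi, centralizerCard_add_single,
    prod_pow_add_single (fun j => p (j.val + 1)), Nat.cast_mul _ (centralizerCard c),
    ENNReal.mul_inv (.inl ha) (.inl (ENNReal.natCast_ne_top _))]
  calc _ = a * a⁻¹ * (p (i.val + 1) * cycleIndexTerm p c) := by rw [cycleIndexTerm]; ring
    _ = _ := by rw [ENNReal.mul_inv_cancel ha (ENNReal.natCast_ne_top _), one_mul]

theorem sum_mul_cycleIndexTerm (p : ℕ → ℝ≥0∞) {n : ℕ} (hn : n ≤ N) (i : Fin N) :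
    ∑ c ∈ tuplesOfWeight N n, (((i.val + 1) * c i : ℕ) : ℝ≥0∞) * cycleIndexTerm p c =
      if i.val < n then p (i.val + 1) * cycleIndexSum p N (n - (i.val + 1)) else 0 := by
  split_ifs with hi
  -- `c ↦ c + e_i` maps the tuples of weight `n - (i + 1)` onto those of weight `n` with `c i ≠ 0`.
  · rw [cycleIndexSum, mul_sum,
      ← sum_congr rfl fun c _ => mul_cycleIndexTerm_add_single p c i]
    refine (sum_subset (s₁ := (tuplesOfWeight N (n - (i.val + 1))).map
      (addRightEmbedding (Pi.single i 1))) (fun c hc => ?_) fun c hc hc' => ?_).symm.trans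
      (sum_map _ _ _)
    · obtain ⟨c', hc', rfl⟩ := mem_map.1 hc
      rw [mem_tuplesOfWeight (by omega)] at hc'
      rw [addRightEmbedding_apply, mem_tuplesOfWeight hn, tupleWeight_add_single, hc']
      omega
    · suffices c i = 0 by simp [this]
      by_contra hci
      have hc_eq : c - Pi.single i 1 + Pi.single i 1 = c := by
        ext j
        rcases eq_or_ne j i with rfl | hj
        · simp only [Pi.add_apply, Pi.sub_apply, Pi.single_eq_same]; omega
        · simp [Pi.single_eq_of_ne hj]
      refine hc' (mem_map.2 ⟨c - Pi.single i 1, ?_, hc_eq⟩)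
      rw [mem_tuplesOfWeight hn, ← hc_eq, tupleWeight_add_single] at hc
      rw [mem_tuplesOfWeight (by omega)]
      omega
  · refine sum_eq_zero fun c hc => ?_
    have hle := le_tupleWeight c i
    rw [(mem_tuplesOfWeight hn).1 hc] at hle
    have hci : c i = 0 := by nlinarith
    simp [hci]

theorem natCast_mul_cycleIndexSum (p : ℕ → ℝ≥0∞) {n : ℕ} (hn : n ≤ N) :
    (n : ℝ≥0∞) * cycleIndexSum p N n =
      ∑ k ∈ range n, p (k + 1) * cycleIndexSum p N (n - (k + 1)) := by
  calc (n : ℝ≥0∞) * cycleIndexSum p N n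
      = ∑ c ∈ tuplesOfWeight N n, ∑ i : Fin N,
          (((i.val + 1) * c i : ℕ) : ℝ≥0∞) * cycleIndexTerm p c := by
        rw [cycleIndexSum, mul_sum]
        refine sum_congr rfl fun c hc => ?_
        rw [← sum_mul, ← Nat.cast_sum, ← tupleWeight, (mem_tuplesOfWeight hn).1 hc]
    _ = ∑ k ∈ range N, if k < n then p (k + 1) * cycleIndexSum p N (n - (k + 1)) else 0 := by
        rw [sum_comm, ← Fin.sum_univ_eq_sum_range
          (fun k => if k < n then p (k + 1) * cycleIndexSum p N (n - (k + 1)) else 0)]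
        exact sum_congr rfl fun i _ => sum_mul_cycleIndexTerm p hn i
    _ = ∑ k ∈ range n, p (k + 1) * cycleIndexSum p N (n - (k + 1)) := by
        rw [← sum_filter]
        congr 1
        ext k
        simp only [mem_filter, mem_range]
        omega

theorem cycleIndexSum_zero (p : ℕ → ℝ≥0∞) : cycleIndexSum p N 0 = 1 := by
  simp [cycleIndexSum, tuplesOfWeight_zero, cycleIndexTerm, centralizerCard]

end CycleIndex

theorem completeSum_eq_cycleIndexSum {ι : Type*} (x : ι → ℝ≥0∞) {n N : ℕ}
    (hn : n ≤ N) : completeSum x n = cycleIndexSum (powerSum x) N n := by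
  induction n using Nat.strong_induction_on with
  | _ n ih =>
    rcases Nat.eq_zero_or_pos n with rfl | hpos
    · rw [completeSum_zero, cycleIndexSum_zero]
    · rw [← ENNReal.mul_right_inj (Nat.cast_ne_zero.2 hpos.ne') (ENNReal.natCast_ne_top n),
        newton_completeSum, natCast_mul_cycleIndexSum _ hn]
      refine sum_congr rfl fun k hk => ?_
      have hk := mem_range.1 hk
      rw [ih _ (by omega) (by omega)]

theorem antitone_ofFn_sym_bijective {α : Type*} [LinearOrder α] (r : ℕ) :
    Function.Bijective fun f : {f : Fin r → α // Antitone f} =>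
      (Sym.mk (List.ofFn f.1 : Multiset α) (by simp) : Sym α r) := by
  constructor
  · rintro ⟨f, hf⟩ ⟨g, hg⟩ h
    have hperm : (List.ofFn f).Perm (List.ofFn g) :=
      Multiset.coe_eq_coe.mp (congrArg Subtype.val h)
    exact Subtype.ext (List.ofFn_injective
      (hperm.eq_of_sortedGE (List.sortedGE_ofFn_iff.2 hf) (List.sortedGE_ofFn_iff.2 hg)))
  · rintro ⟨M, hM⟩
    set l := M.sort (· ≥ ·)
    have hl : l.length = r := by simp [l, hM]
    refine ⟨⟨fun i => l.get (i.cast hl.symm), ?_⟩, ?_⟩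
    · intro i j hij
      exact (List.sortedGE_iff_pairwise.2 (Multiset.pairwise_sort M _)).antitone_get hij
    · apply Subtype.ext
      show ((List.ofFn fun i => l.get (i.cast hl.symm) : List α) : Multiset α) = M
      rw [List.ofFn_congr hl.symm]
      simp only [Fin.cast_cast, Fin.cast_eq_self, List.ofFn_get]
      exact Multiset.sort_eq M _

noncomputable def oddTerm (s : ℝ) (n : ℕ+) : ℝ := (((2 * (n : ℕ) - 1 : ℕ) : ℝ) ^ s)⁻¹

theorem oddTerm_nonneg (s : ℝ) (n : ℕ+) : 0 ≤ oddTerm s n := by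
  unfold oddTerm; positivity

theorem oddTerm_pow (s : ℝ) (k : ℕ) (n : ℕ+) : oddTerm s n ^ k = oddTerm (k * s) n := by
  rw [oddTerm, oddTerm, mul_comm (k : ℝ) s, Real.rpow_mul (Nat.cast_nonneg _), Real.rpow_natCast,
    inv_pow]

theorem summable_oddTerm {s : ℝ} (hs : 1 < s) : Summable (oddTerm s) := by
  have hnat : Summable fun n : ℕ+ => (((n : ℕ) : ℝ) ^ s)⁻¹ :=
    (Real.summable_nat_rpow_inv.2 hs).comp_injective PNat.coe_injective
  refine hnat.of_nonneg_of_le (oddTerm_nonneg s) fun n => ?_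
  have hn : (n : ℕ) ≤ 2 * (n : ℕ) - 1 := by omega
  exact inv_anti₀ (by positivity) (Real.rpow_le_rpow (by positivity) (by exact_mod_cast hn)
    (by linarith))

theorem tFun_natCast_mul_eq_toReal_powerSum (s : ℝ) (k : ℕ) :
    tFun (k * s) = (powerSum (fun n => ENNReal.ofReal (oddTerm s n)) k).toReal := by
  rw [powerSum, ENNReal.tsum_toReal_eq fun _ => ENNReal.pow_ne_top ENNReal.ofReal_ne_top]
  exact tsum_congr fun n => by
    rw [ENNReal.toReal_pow, ENNReal.toReal_ofReal (oddTerm_nonneg s n), oddTerm_pow]; rfl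

theorem powerSum_ofReal_oddTerm_ne_top {s : ℝ} (hs : 1 < s) {k : ℕ} (hk : k ≠ 0) :
    powerSum (fun n => ENNReal.ofReal (oddTerm s n)) k ≠ ∞ := by
  have hks : 1 < (k : ℝ) * s := by
    nlinarith [show (1 : ℝ) ≤ k by exact_mod_cast Nat.one_le_iff_ne_zero.2 hk]
  simp_rw [powerSum, ← ENNReal.ofReal_pow (oddTerm_nonneg s _), oddTerm_pow]
  exact (summable_oddTerm hks).tsum_ofReal_ne_top

theorem multTStar_eq_toReal_completeSum (r : ℕ) (s : ℝ) :
    multTStar r s = (completeSum (fun n => ENNReal.ofReal (oddTerm s n)) r).toReal := by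
  rw [multTStar, completeSum, ← (Equiv.ofBijective _ (antitone_ofFn_sym_bijective r)).tsum_eq
    (fun M : Sym ℕ+ r => ((M : Multiset ℕ+).map fun n => ENNReal.ofReal (oddTerm s n)).prod)]
  simp only [Equiv.ofBijective_apply, Sym.coe_mk, Multiset.map_coe, Multiset.prod_coe,
    List.map_ofFn, List.prod_ofFn, Function.comp_apply]
  rw [ENNReal.tsum_toReal_eq fun _ => ENNReal.prod_ne_top fun _ _ => ENNReal.ofReal_ne_top]
  refine tsum_congr fun f => ?_
  rw [ENNReal.toReal_prod]
  exact prod_congr rfl fun i _ => (ENNReal.toReal_ofReal (oddTerm_nonneg s _)).symm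

theorem multTStar_explicit_general (r : ℕ) (s : ℝ) (hs : 1 < s) :
    multTStar r s =
      ∑ c ∈ weightedTuples r,
        1 / (∏ i : Fin r, ((((i : ℕ) + 1 : ℕ) : ℝ) ^ c i * ((c i).factorial : ℝ))) *
        ∏ i : Fin r, tFun ((((i : ℕ) + 1 : ℕ) : ℝ) * s) ^ c i := by
  have hfinite : ∀ c ∈ tuplesOfWeight r r,
      cycleIndexTerm (powerSum fun n => ENNReal.ofReal (oddTerm s n)) c ≠ ∞ := fun c _ =>
    ENNReal.mul_ne_top (ENNReal.inv_ne_top.2 (Nat.cast_ne_zero.2 (centralizerCard_pos c).ne'))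
      (ENNReal.prod_ne_top fun i _ =>
        ENNReal.pow_ne_top (powerSum_ofReal_oddTerm_ne_top hs i.val.succ_ne_zero))
  rw [multTStar_eq_toReal_completeSum, completeSum_eq_cycleIndexSum _ le_rfl, cycleIndexSum,
    ENNReal.toReal_sum hfinite]
  refine sum_congr rfl fun c _ => ?_
  simp only [cycleIndexTerm, centralizerCard, ENNReal.toReal_mul, ENNReal.toReal_inv,
    ENNReal.toReal_natCast, ENNReal.toReal_prod, ENNReal.toReal_pow, Nat.cast_prod, Nat.cast_mul,
    Nat.cast_pow, one_div, tFun_natCast_mul_eq_toReal_powerSum]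

/-- For `r ≥ 1` and real `s > 1`:
`t_r⋆(s) = ∑_{c₁+2c₂+⋯+rc_r=r} 1/(1^{c₁}c₁!⋯r^{c_r}c_r!) · t(s)^{c₁}⋯t(rs)^{c_r}`. -/
theorem multTStar_explicit (r : ℕ) (hr : 1 ≤ r) (s : ℝ) (hs : 1 < s) :
    multTStar r s =
      ∑ c ∈ weightedTuples r,
        1 / (∏ i : Fin r, ((((i : ℕ) + 1 : ℕ) : ℝ) ^ c i * ((c i).factorial : ℝ))) *
        ∏ i : Fin r, tFun ((((i : ℕ) + 1 : ℕ) : ℝ) * s) ^ c i :=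
  multTStar_explicit_general r s hs
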